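/- e(3, 10; 37) ≤ 132: there exists a triangle-free simple graph on 37 vertices with exactly 132 edges in which every independent set has size at most 9. -/

import Mathlib

/-- A finset of vertices is independent in `G` if no two distinct members are adjacent. -/
def FinsetIndep {V : Type*} (G : SimpleGraph V) (s : Finset V) : Prop :=
  ∀ v ∈ s, ∀ w ∈ s, v ≠ w → ¬ G.Adj v w

/-! The witness graph is given by explicit neighbour lists. Triangle-freeness and the edge count
(half the degree sum) are finite checks; that no 10 vertices are pairwise non-adjacent is
certified by an exhaustive branch-and-bound search, whose completeness is proved for arbitrary
graphs. -/

namespace SimpleGraph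

variable {V : Type*} (G : SimpleGraph V)

theorem cliqueFree_three_of_forall_adj (h : ∀ u v w, G.Adj u v → G.Adj u w → ¬ G.Adj v w) :
    G.CliqueFree 3 := by
  classical
  intro s hs
  obtain ⟨u, v, w, huv, huw, hvw, -⟩ := is3Clique_iff.mp hs
  exact h u v w huv huw hvw

theorem ncard_edgeSet_eq_of_sum_degrees [Fintype V] [DecidableRel G.Adj] {m : ℕ}
    (h : ∑ v, G.degree v = 2 * m) : G.edgeSet.ncard = m := by
  rw [← coe_edgeFinset, Set.ncard_coe_finset]
  rw [sum_degrees_eq_twice_card_edges] at h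
  omega

variable [DecidableRel G.Adj]

/-- Branch-and-bound search for `k` pairwise non-adjacent vertices in `cand`. The first argument
is fuel; it suffices once it is at least `cand.length`. -/
def searchIndep : ℕ → List V → ℕ → Bool
  | _, _, 0 => true
  | 0, _, _ + 1 => false
  | _ + 1, [], _ + 1 => false
  | n + 1, v :: rest, k + 1 =>
    if rest.length < k then false
    else searchIndep n (rest.filter (¬ G.Adj v ·)) k || searchIndep n rest (k + 1)

theorem searchIndep_eq_true {n : ℕ} {cand : List V} (hn : cand.length ≤ n) {s : Finset V}
    (hs : FinsetIndep G s) (hsub : ∀ x ∈ s, x ∈ cand) {k : ℕ} (hk : k ≤ s.card) :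
    G.searchIndep n cand k = true := by
  classical
  induction n generalizing cand s k with
  | zero =>
    obtain rfl : cand = [] := List.length_eq_zero_iff.mp (Nat.le_zero.mp hn)
    obtain rfl : s = ∅ := Finset.eq_empty_of_forall_notMem fun x hx => by simpa using hsub x hx
    obtain rfl : k = 0 := by simpa using hk
    rfl
  | succ n ih =>
    match k, cand with
    | 0, _ => cases cand <;> rfl
    | k + 1, [] =>
      obtain rfl : s = ∅ := Finset.eq_empty_of_forall_notMem fun x hx => by simpa using hsub x hx
      simp at hk
    | k + 1, v :: rest =>
      have hrest : rest.length ≤ n := by simpa using hn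
      have hcard : s.card ≤ rest.length + 1 :=
        calc s.card ≤ (v :: rest).toFinset.card :=
              Finset.card_le_card fun x hx => List.mem_toFinset.mpr (hsub x hx)
          _ ≤ rest.length + 1 := by simpa using List.toFinset_card_le (v :: rest)
      rw [searchIndep, if_neg (by omega), Bool.or_eq_true]
      by_cases hv : v ∈ s
      · left
        refine ih ((List.length_filter_le _ _).trans hrest) (s := s.erase v)
          (fun a ha b hb => hs a (Finset.mem_of_mem_erase ha) b (Finset.mem_of_mem_erase hb))
          (fun x hx => ?_) (by rw [Finset.card_erase_of_mem hv]; omega)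
        obtain ⟨hxv, hxs⟩ := Finset.mem_erase.mp hx
        have hx_rest : x ∈ rest := (List.mem_cons.mp (hsub x hxs)).resolve_left hxv
        simpa [hx_rest] using hs v hv x hxs (Ne.symm hxv)
      · right
        exact ih hrest hs (fun x hx => (List.mem_cons.mp (hsub x hx)).resolve_left
          (by rintro rfl; exact hv hx)) hk

theorem card_lt_of_searchIndep_eq_false {cand : List V} (hcand : ∀ v, v ∈ cand) {k : ℕ}
    (h : G.searchIndep cand.length cand k = false) {s : Finset V} (hs : FinsetIndep G s) :
    s.card < k := by
  by_contra! hk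
  simp [G.searchIndep_eq_true le_rfl hs (fun x _ => hcand x) hk] at h

end SimpleGraph

namespace E310

open SimpleGraph

def neighbours : List (List ℕ) := [
    [1, 5, 12, 19, 26, 33, 35],
    [0, 4, 6, 13, 20, 27, 34, 36],
    [3, 5, 7, 14, 21, 28, 35],
    [2, 4, 6, 8, 15, 22, 29, 36],
    [1, 3, 5, 7, 9, 23, 30, 32],
    [0, 2, 4, 6, 8, 10, 31],
    [1, 3, 5, 7, 9, 11, 18, 32],
    [2, 4, 6, 8, 10, 12, 19, 26],
    [3, 5, 7, 9, 13, 20, 27],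
    [4, 6, 8, 14, 21, 28, 35],
    [5, 7, 15, 22, 29, 36],
    [6, 14, 16, 20, 23, 30],
    [0, 7, 13, 15, 17, 24, 28, 31],
    [1, 8, 12, 14, 16, 25, 32],
    [2, 9, 11, 13, 15, 17, 19, 27, 33],
    [3, 10, 12, 14, 16, 18, 20, 34],
    [11, 13, 15, 17, 19, 21, 28],
    [12, 14, 16, 18, 20, 22, 29],
    [6, 15, 17, 19, 23, 30],
    [0, 7, 14, 16, 18, 24, 31],
    [1, 8, 11, 15, 17, 25, 32],
    [2, 9, 16, 22, 24, 26, 30, 33],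
    [3, 10, 17, 21, 25, 27, 34],
    [4, 11, 18, 24, 26],
    [12, 19, 21, 23, 25, 27, 29],
    [13, 20, 22, 24, 26, 28, 30],
    [0, 7, 21, 23, 25, 27, 29, 31],
    [1, 8, 14, 22, 24, 26, 28, 30, 32],
    [2, 9, 12, 16, 25, 27, 33],
    [3, 10, 17, 24, 26, 30, 34],
    [4, 11, 18, 21, 25, 27, 29],
    [5, 12, 19, 26, 34, 36],
    [4, 6, 13, 20, 27, 33, 35],
    [0, 14, 21, 28, 32, 34, 36],
    [1, 15, 22, 29, 31, 33, 35],
    [0, 2, 9, 32, 34, 36],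
    [1, 3, 10, 31, 33, 35]]

def witness : SimpleGraph (Fin 37) where
  Adj v w := (w : ℕ) ∈ neighbours.getD v []
  symm := ⟨by decide⟩
  loopless := ⟨by decide⟩

instance : DecidableRel witness.Adj :=
  fun v w => inferInstanceAs (Decidable ((w : ℕ) ∈ neighbours.getD v []))

theorem witness_cliqueFree : witness.CliqueFree 3 :=
  cliqueFree_three_of_forall_adj _ (by decide)

theorem witness_searchIndep_ten : witness.searchIndep 37 (List.finRange 37) 10 = false := by
  decide +kernel

theorem witness_card_le_of_finsetIndep (s : Finset (Fin 37)) (hs : FinsetIndep witness s) :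
    s.card ≤ 9 :=
  Nat.le_of_lt_succ <| card_lt_of_searchIndep_eq_false _ List.mem_finRange
    (by simpa using witness_searchIndep_ten) hs

theorem witness_ncard_edgeSet : witness.edgeSet.ncard = 132 :=
  ncard_edgeSet_eq_of_sum_degrees _ (by decide +kernel)

end E310

/-- `e(3, 10; 37) ≤ 132`: there exists a triangle-free graph on 37 vertices with exactly
132 edges in which every independent set has size at most 9. -/
theorem stmt_19 :
    ∃ G : SimpleGraph (Fin 37), G.CliqueFree 3 ∧
      (∀ s : Finset (Fin 37), FinsetIndep G s → s.card ≤ 9) ∧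
      G.edgeSet.ncard = 132 :=
  ⟨E310.witness, E310.witness_cliqueFree, E310.witness_card_le_of_finsetIndep,
    E310.witness_ncard_edgeSet⟩
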